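/- arXiv:1206.1167 — 5 statements merged into one kernel-verified Lean document; each statement's English description precedes it below -/
import Mathlib

section
/- Let N ≥ 3 and define F(x,t) = (1/√(4πt))·exp(−(log|x| + (N−2)t)²/(4t)) for x ∈ ℝ^N \ {0} and t > 0. Then F satisfies the equation |x|^{-2}·∂_t F = ΔF at every point (x,t) with x ≠ 0, t > 0. -/
/-!
Write `F(r,t) = K(t, log r + (N-2)t)` with `K(t,w) = (4πt)^{-1/2} exp(-w²/(4t))` the one-dimensional
heat kernel. In the variable `u = log r`, the radial Laplacian becomes
`F_rr + ((N-1)/r) F_r = (G_uu + (N-2) G_u) / r²` for `G(u) = F(eᵘ, t)`, while the heat equation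
`K_t = K_ww` along the drifting line `w = u + (N-2)t` gives `F_t = G_uu + (N-2) G_u`.
-/

open Real

noncomputable def heatKernel (t w : ℝ) : ℝ :=
  1 / √(4 * π * t) * exp (-w ^ 2 / (4 * t))

theorem hasDerivAt_heatKernel (t w : ℝ) :
    HasDerivAt (heatKernel t) (-(w / (2 * t)) * heatKernel t w) w := by
  have h := ((((hasDerivAt_pow 2 w).fun_neg.div_const (4 * t)).exp).const_mul (1 / √(4 * π * t)))
  refine h.congr_deriv ?_
  simp only [heatKernel]
  ring

theorem deriv_heatKernel (t : ℝ) :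
    deriv (heatKernel t) = fun w => -(w / (2 * t)) * heatKernel t w :=
  funext fun w => (hasDerivAt_heatKernel t w).deriv

theorem hasDerivAt_deriv_heatKernel (t w : ℝ) :
    HasDerivAt (deriv (heatKernel t))
      ((w ^ 2 / (4 * t ^ 2) - 1 / (2 * t)) * heatKernel t w) w := by
  rw [deriv_heatKernel]
  have h := (((hasDerivAt_id' w).div_const (2 * t)).fun_neg).fun_mul (hasDerivAt_heatKernel t w)
  refine h.congr_deriv ?_
  ring

/-- The coefficient is that of `K_ww + c K_w`, by the heat equation `K_t = K_ww`. -/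
theorem hasDerivAt_heatKernel_drift (u c : ℝ) {t : ℝ} (ht : 0 < t) :
    HasDerivAt (fun s => heatKernel s (u + c * s))
      ((((u + c * t) ^ 2 / (4 * t ^ 2) - 1 / (2 * t)) - c * ((u + c * t) / (2 * t)))
        * heatKernel t (u + c * t)) t := by
  have h4πt : 0 < 4 * π * t := by positivity
  have hsqrt := (hasDerivAt_sqrt h4πt.ne').comp t ((hasDerivAt_id' t).const_mul (4 * π))
  have hline : HasDerivAt (fun s => u + c * s) c t := by
    simpa using ((hasDerivAt_id' t).const_mul c).const_add u
  have hexp :=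
    ((hline.fun_pow 2).fun_neg.fun_div ((hasDerivAt_id' t).const_mul 4) (by positivity)).exp
  have h := (hsqrt.fun_inv (sqrt_pos.mpr h4πt).ne').fun_mul hexp
  simp only [heatKernel, one_div]
  refine h.congr_deriv ?_
  have hπ : π ≠ 0 := pi_ne_zero
  have hsq : √(4 * π * t) ^ 2 = 4 * π * t := sq_sqrt h4πt.le
  simp only [Function.comp_apply]
  field_simp
  rw [hsq]
  ring

theorem hasDerivAt_comp_log {G G' : ℝ → ℝ} {r : ℝ} (hG : HasDerivAt G (G' (log r)) (log r))
    (hr : 0 < r) : HasDerivAt (fun σ => G (log σ)) (G' (log r) / r) r := by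
  rw [div_eq_mul_inv]
  exact hG.comp r (hasDerivAt_log hr.ne')

theorem radialLaplacian_comp_log {G G' G'' : ℝ → ℝ} (hG : ∀ u, HasDerivAt G (G' u) u)
    (hG' : ∀ u, HasDerivAt G' (G'' u) u) (n : ℝ) {r : ℝ} (hr : 0 < r) :
    deriv (fun ρ => deriv (fun σ => G (log σ)) ρ) r
        + ((n - 1) / r) * deriv (fun σ => G (log σ)) r
      = (G'' (log r) + (n - 2) * G' (log r)) / r ^ 2 := by
  have hfirst : ∀ ρ, 0 < ρ → deriv (fun σ => G (log σ)) ρ = G' (log ρ) / ρ :=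
    fun ρ hρ => (hasDerivAt_comp_log (hG _) hρ).deriv
  have hnear : (fun ρ => deriv (fun σ => G (log σ)) ρ) =ᶠ[nhds r] fun ρ => G' (log ρ) / ρ :=
    (eventually_gt_nhds hr).mono hfirst
  have hsecond := (hasDerivAt_comp_log (hG' _) hr).fun_div (hasDerivAt_id' r) hr.ne'
  rw [hnear.deriv_eq, hsecond.deriv, hfirst r hr]
  field_simp
  ring

theorem stmt0_general (N : ℕ) (F : ℝ → ℝ → ℝ)
    (hF : ∀ r t : ℝ, F r t = (1 / Real.sqrt (4 * π * t)) *
      Real.exp (-(Real.log r + ((N : ℝ) - 2) * t) ^ 2 / (4 * t))) :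
    ∀ r t : ℝ, 0 < r → 0 < t →
      (1 / r ^ 2) * deriv (fun s => F r s) t =
        deriv (fun ρ => deriv (fun σ => F σ t) ρ) r
          + (((N : ℝ) - 1) / r) * deriv (fun σ => F σ t) r := by
  intro r t hr ht
  set c : ℝ := (N : ℝ) - 2
  have htime : (fun s => F r s) = fun s => heatKernel s (log r + c * s) :=
    funext fun s => hF r s
  have hspace : (fun σ => F σ t) = fun σ => heatKernel t (log σ + c * t) :=
    funext fun σ => hF σ t
  have hG : ∀ u, HasDerivAt (fun u => heatKernel t (u + c * t))
      (deriv (heatKernel t) (u + c * t)) u := fun u => by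
    rw [deriv_heatKernel]
    exact (hasDerivAt_heatKernel t (u + c * t)).comp_add_const u (c * t)
  have hG' : ∀ u, HasDerivAt (fun u => deriv (heatKernel t) (u + c * t))
      (((u + c * t) ^ 2 / (4 * t ^ 2) - 1 / (2 * t)) * heatKernel t (u + c * t)) u := fun u =>
    (hasDerivAt_deriv_heatKernel t (u + c * t)).comp_add_const u (c * t)
  rw [htime, hspace, (hasDerivAt_heatKernel_drift (log r) c ht).deriv,
    show ((N : ℝ) - 1) = c + 2 - 1 by ring, radialLaplacian_comp_log hG hG' (c + 2) hr,
    deriv_heatKernel]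
  ring

/-- The profile `F(x,t) = (4πt)^{-1/2} exp(-(log|x|+(N-2)t)²/(4t))` is a radially symmetric
solution of `|x|^{-2} ∂ₜ F = ΔF` away from the origin; in radial coordinates `r = |x| > 0`
the Laplacian reads `F_rr + ((N-1)/r) F_r`. -/
theorem stmt0 (N : ℕ) (hN : 3 ≤ N) (F : ℝ → ℝ → ℝ)
    (hF : ∀ r t : ℝ, F r t = (1 / Real.sqrt (4 * π * t)) *
      Real.exp (-(Real.log r + ((N : ℝ) - 2) * t) ^ 2 / (4 * t))) :
    ∀ r t : ℝ, 0 < r → 0 < t →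
      (1 / r ^ 2) * deriv (fun s => F r s) t =
        deriv (fun ρ => deriv (fun σ => F σ t) ρ) r
          + (((N : ℝ) - 1) / r) * deriv (fun σ => F σ t) r :=
  stmt0_general N F hF
end

section
/- Let N ≥ 3 and define E(x,t) = erfc((log|x| + (N−2)t)/(2√t)) for x ≠ 0, t > 0, where erfc(ξ) = (2/√π)∫_ξ^∞ e^{−θ²} dθ. Then E satisfies |x|^{-2}·∂_t E = ΔE at every point (x,t) with x ≠ 0, t > 0. -/
/-!
Substituting `r = eʸ` turns `r⁻² E_t = E_rr + ((N-1)/r) E_r` into the drifted heat equation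
`E_t = E_yy + (N-2) E_y`, which in the frame `y + (N-2)t` is the plain heat equation. The
function `erfc(y/(2√t))` solves the latter because it is a profile `g(ξ)` of the similarity
variable `ξ = y/(2√t)` with `g'' = -2ξ g'`, and `erfc' = -(2/√π) e^{-ξ²}` satisfies this.
-/

open Real MeasureTheory

theorem hasDerivAt_integral_Ioi {f : ℝ → ℝ} (hf : Integrable f) (hc : Continuous f)
    (x : ℝ) :
    HasDerivAt (fun y => ∫ θ in Set.Ioi y, f θ) (-f x) x := by
  have hsplit : (fun y => ∫ θ in Set.Ioi y, f θ)
      = fun y => (∫ θ in Set.Ioi 0, f θ) - ∫ θ in (0 : ℝ)..y, f θ := by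
    funext y
    rw [← intervalIntegral.integral_Ioi_sub_Ioi' hf.integrableOn hf.integrableOn, sub_sub_cancel]
  rw [hsplit]
  exact (intervalIntegral.integral_hasDerivAt_right hf.intervalIntegrable
    (hc.stronglyMeasurableAtFilter volume _) hc.continuousAt).const_sub _

theorem hasDerivAt_const_mul_integral_Ioi_exp_neg_sq (c ξ : ℝ) :
    HasDerivAt (fun x => c * ∫ θ in Set.Ioi x, exp (-θ ^ 2)) (-(c * exp (-ξ ^ 2))) ξ := by
  have hint : Integrable fun θ : ℝ => exp (-θ ^ 2) := by
    simpa using integrable_exp_neg_mul_sq one_pos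
  simpa using (hasDerivAt_integral_Ioi hint (by fun_prop) ξ).const_mul c

theorem hasDerivAt_neg_mul_exp_neg_sq (c ξ : ℝ) :
    HasDerivAt (fun x => -(c * exp (-x ^ 2))) (-2 * ξ * -(c * exp (-ξ ^ 2))) ξ := by
  refine (((hasDerivAt_pow 2 ξ).fun_neg.exp).const_mul c).fun_neg.congr_deriv ?_
  push_cast
  ring

noncomputable def similarityVariable (a r t : ℝ) : ℝ := (log r + a * t) / (2 * √t)

theorem hasDerivAt_similarityVariable_time (a r : ℝ) {t : ℝ} (ht : 0 < t) :
    HasDerivAt (similarityVariable a r)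
      (a / (2 * √t) - similarityVariable a r t / (2 * t)) t := by
  refine ((((hasDerivAt_id t).const_mul a).const_add (log r)).fun_div
    ((hasDerivAt_sqrt ht.ne').const_mul 2) (by positivity)).congr_deriv ?_
  simp only [similarityVariable, id]
  field_simp
  rw [sq_sqrt ht.le]

theorem hasDerivAt_similarityVariable_space (a t : ℝ) {r : ℝ} (hr : 0 < r) :
    HasDerivAt (fun ρ => similarityVariable a ρ t) (r⁻¹ / (2 * √t)) r :=
  ((hasDerivAt_log hr.ne').add_const (a * t)).div_const (2 * √t)

section Profile

variable {g g' : ℝ → ℝ} (hg : ∀ ξ, HasDerivAt g (g' ξ) ξ)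
  (hg' : ∀ ξ, HasDerivAt g' (-2 * ξ * g' ξ) ξ) (a : ℝ) {r t : ℝ}

include hg in
theorem deriv_comp_similarityVariable_space (hr : 0 < r) :
    deriv (fun ρ => g (similarityVariable a ρ t)) r =
      g' (similarityVariable a r t) * (r⁻¹ / (2 * √t)) :=
  ((hg _).comp r (hasDerivAt_similarityVariable_space a t hr)).deriv

include hg hg' in
theorem hasDerivAt_deriv_comp_similarityVariable_space (hr : 0 < r) :
    HasDerivAt (fun ρ => deriv (fun σ => g (similarityVariable a σ t)) ρ)
      (-2 * similarityVariable a r t * g' (similarityVariable a r t) * (r⁻¹ / (2 * √t)) ^ 2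
        + g' (similarityVariable a r t) * (-(r ^ 2)⁻¹ / (2 * √t))) r := by
  have hfirst : (fun ρ => deriv (fun σ => g (similarityVariable a σ t)) ρ)
      =ᶠ[nhds r] fun ρ => g' (similarityVariable a ρ t) * (ρ⁻¹ / (2 * √t)) :=
    Filter.eventually_of_mem (Ioi_mem_nhds hr) fun ρ hρ =>
      deriv_comp_similarityVariable_space hg a hρ
  refine HasDerivAt.congr_of_eventuallyEq ?_ hfirst
  refine (((hg' _).comp r (hasDerivAt_similarityVariable_space a t hr)).fun_mul
    ((hasDerivAt_inv hr.ne').div_const _)).congr_deriv ?_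
  simp only [Function.comp_apply]
  ring

include hg hg' in
theorem radial_heat_eq_of_comp_similarityVariable (hr : 0 < r) (ht : 0 < t) :
    (1 / r ^ 2) * deriv (fun s => g (similarityVariable a r s)) t =
      deriv (fun ρ => deriv (fun σ => g (similarityVariable a σ t)) ρ) r
        + ((a + 1) / r) * deriv (fun σ => g (similarityVariable a σ t)) r := by
  have htime : HasDerivAt (fun s => g (similarityVariable a r s)) _ t :=
    (hg _).comp t (hasDerivAt_similarityVariable_time a r ht)
  rw [htime.deriv, (hasDerivAt_deriv_comp_similarityVariable_space hg hg' a hr).deriv,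
    deriv_comp_similarityVariable_space hg a hr]
  set ξ := similarityVariable a r t
  field_simp
  linear_combination -(g' ξ * ξ) * sq_sqrt ht.le

end Profile

theorem stmt1_general (N : ℕ) (erfc : ℝ → ℝ)
    (herfc : ∀ ξ : ℝ, erfc ξ = (2 / Real.sqrt π) * ∫ θ in Set.Ioi ξ, Real.exp (-θ ^ 2))
    (E : ℝ → ℝ → ℝ)
    (hE : ∀ r t : ℝ, E r t = erfc ((Real.log r + ((N : ℝ) - 2) * t) / (2 * Real.sqrt t))) :
    ∀ r t : ℝ, 0 < r → 0 < t →
      (1 / r ^ 2) * deriv (fun s => E r s) t =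
        deriv (fun ρ => deriv (fun σ => E σ t) ρ) r
          + (((N : ℝ) - 1) / r) * deriv (fun σ => E σ t) r := by
  intro r t hr ht
  obtain rfl : E = fun r t => erfc (similarityVariable ((N : ℝ) - 2) r t) := funext₂ hE
  obtain rfl : erfc = fun ξ => 2 / √π * ∫ θ in Set.Ioi ξ, exp (-θ ^ 2) := funext herfc
  rw [show (N : ℝ) - 1 = ((N : ℝ) - 2) + 1 by ring]
  exact radial_heat_eq_of_comp_similarityVariable
    (hasDerivAt_const_mul_integral_Ioi_exp_neg_sq _) (hasDerivAt_neg_mul_exp_neg_sq _) _ hr ht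

/-- The profile `E(x,t) = erfc((log|x|+(N-2)t)/(2√t))`, with
`erfc ξ = (2/√π)∫_ξ^∞ e^{-θ²} dθ`, solves `|x|^{-2} ∂ₜ E = ΔE` away from the origin;
in radial coordinates `r = |x| > 0` the Laplacian is `E_rr + ((N-1)/r) E_r`. -/
theorem stmt1 (N : ℕ) (hN : 3 ≤ N) (erfc : ℝ → ℝ)
    (herfc : ∀ ξ : ℝ, erfc ξ = (2 / Real.sqrt π) * ∫ θ in Set.Ioi ξ, Real.exp (-θ ^ 2))
    (E : ℝ → ℝ → ℝ)
    (hE : ∀ r t : ℝ, E r t = erfc ((Real.log r + ((N : ℝ) - 2) * t) / (2 * Real.sqrt t))) :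
    ∀ r t : ℝ, 0 < r → 0 < t →
      (1 / r ^ 2) * deriv (fun s => E r s) t =
        deriv (fun ρ => deriv (fun σ => E σ t) ρ) r
          + (((N : ℝ) - 1) / r) * deriv (fun σ => E σ t) r :=
  stmt1_general N erfc herfc E hE
end

section
/- Let N, N̄ ≥ 3 and let u be a radially symmetric solution of |x|^{-2}u_t = Δu in ℝ^N × (0,∞) (away from x = 0). Define ū(x̄,t) = u(x,t) where |x| = |x̄|·e^{(N̄−N)t}. Then ū is a radially symmetric solution of |x̄|^{-2}ū_t = Δū in dimension N̄ (away from x̄ = 0). -/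
/-!
Put `L = e^{(N̄-N)t}` and `R = rL`. The chain rule gives `ḡ_r = L f_r(R)`, `ḡ_rr = L² f_rr(R)` and
`ḡ_t = (N̄-N) R f_r(R) + f_t(R)`. Dividing `ḡ_t` by `r² = R²/L²` and using the equation for `f`
at `(R, t)`, the extra drift term `(N̄-N) R f_r` turns the coefficient `N - 1` into `N̄ - 1`.
-/

open Real

section PartialDeriv

variable {𝕜 F : Type*} [NontriviallyNormedField 𝕜] [NormedAddCommGroup F] [NormedSpace 𝕜 F]
  {f : 𝕜 → 𝕜 → F}

theorem hasDerivAt_uncurry_comp_fderiv {φ ψ : 𝕜 → 𝕜} {a b s : 𝕜}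
    (hf : DifferentiableAt 𝕜 (Function.uncurry f) (φ s, ψ s))
    (hφ : HasDerivAt φ a s) (hψ : HasDerivAt ψ b s) :
    HasDerivAt (fun u => f (φ u) (ψ u)) (fderiv 𝕜 (Function.uncurry f) (φ s, ψ s) (a, b)) s :=
  hf.hasFDerivAt.comp_hasDerivAt (l := Function.uncurry f) s (hφ.prodMk hψ)

theorem deriv_left_eq_fderiv {x y : 𝕜} (hf : DifferentiableAt 𝕜 (Function.uncurry f) (x, y)) :
    deriv (fun σ => f σ y) x = fderiv 𝕜 (Function.uncurry f) (x, y) (1, 0) :=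
  (hasDerivAt_uncurry_comp_fderiv (φ := id) (ψ := fun _ => y) hf
    (hasDerivAt_id x) (hasDerivAt_const x y)).deriv

theorem deriv_right_eq_fderiv {x y : 𝕜} (hf : DifferentiableAt 𝕜 (Function.uncurry f) (x, y)) :
    deriv (fun σ => f x σ) y = fderiv 𝕜 (Function.uncurry f) (x, y) (0, 1) :=
  (hasDerivAt_uncurry_comp_fderiv (φ := fun _ => x) (ψ := id) hf
    (hasDerivAt_const y x) (hasDerivAt_id y)).deriv

theorem hasDerivAt_uncurry_comp {φ ψ : 𝕜 → 𝕜} {a b s : 𝕜}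
    (hf : DifferentiableAt 𝕜 (Function.uncurry f) (φ s, ψ s))
    (hφ : HasDerivAt φ a s) (hψ : HasDerivAt ψ b s) :
    HasDerivAt (fun u => f (φ u) (ψ u))
      (a • deriv (fun σ => f σ (ψ s)) (φ s) + b • deriv (fun σ => f (φ s) σ) (ψ s)) s := by
  have hab : ((a, b) : 𝕜 × 𝕜) = a • (1, 0) + b • (0, 1) := by simp
  rw [deriv_left_eq_fderiv hf, deriv_right_eq_fderiv hf, ← map_smul, ← map_smul, ← map_add,
    ← hab]
  exact hasDerivAt_uncurry_comp_fderiv hf hφ hψ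

end PartialDeriv

theorem deriv_comp_mul_right {𝕜 E : Type*} [NontriviallyNormedField 𝕜] [NormedAddCommGroup E]
    [NormedSpace 𝕜 E] (c : 𝕜) (h : 𝕜 → E) (x : 𝕜) :
    deriv (fun y => h (y * c)) x = c • deriv h (x * c) := by
  simpa only [mul_comm _ c] using deriv_comp_mul_left c h x

theorem deriv_apply_mul_exp {f : ℝ → ℝ → ℝ} (hf : Differentiable ℝ (Function.uncurry f))
    (r c t : ℝ) :
    deriv (fun s => f (r * exp (c * s)) s) t =
      c * (r * exp (c * t)) * deriv (fun σ => f σ t) (r * exp (c * t))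
        + deriv (fun s => f (r * exp (c * t)) s) t := by
  have hφ : HasDerivAt (fun s => r * exp (c * s)) (c * (r * exp (c * t))) t :=
    (((hasDerivAt_id' t).const_mul c).exp.const_mul r).congr_deriv (by ring)
  simpa only [smul_eq_mul, one_mul] using
    (hasDerivAt_uncurry_comp (hf _) hφ (hasDerivAt_id' t)).deriv

theorem stmt12_general (N M : ℕ)
    (f : ℝ → ℝ → ℝ) (hf : ContDiff ℝ 2 (Function.uncurry f))
    (hsol : ∀ r t : ℝ, 0 < r → 0 < t →
      (1 / r ^ 2) * deriv (fun s => f r s) t =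
        deriv (fun ρ => deriv (fun σ => f σ t) ρ) r
          + (((N : ℝ) - 1) / r) * deriv (fun σ => f σ t) r)
    (g : ℝ → ℝ → ℝ)
    (hg : ∀ r t : ℝ, g r t = f (r * Real.exp (((M : ℝ) - (N : ℝ)) * t)) t) :
    ∀ r t : ℝ, 0 < r → 0 < t →
      (1 / r ^ 2) * deriv (fun s => g r s) t =
        deriv (fun ρ => deriv (fun σ => g σ t) ρ) r
          + (((M : ℝ) - 1) / r) * deriv (fun σ => g σ t) r := by
  intro r t hr ht
  set c : ℝ := (M : ℝ) - N
  set L := exp (c * t)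
  have hL : 0 < L := exp_pos _
  have hg_r : ∀ ρ, deriv (fun σ => g σ t) ρ = L * deriv (fun σ => f σ t) (ρ * L) := by
    intro ρ
    rw [← smul_eq_mul, ← deriv_comp_mul_right]
    simp only [hg, L]
  have hg_rr : deriv (fun ρ => deriv (fun σ => g σ t) ρ) r
      = L * (L * deriv (fun ρ => deriv (fun σ => f σ t) ρ) (r * L)) := by
    simp_rw [hg_r]
    rw [deriv_const_mul_field, deriv_comp_mul_right L (deriv fun σ => f σ t) r, smul_eq_mul]
  have hg_t : deriv (fun s => g r s) t
      = c * (r * L) * deriv (fun σ => f σ t) (r * L) + deriv (fun s => f (r * L) s) t := by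
    simp_rw [hg]
    exact deriv_apply_mul_exp (hf.differentiable (by norm_num)) r c t
  have hsolR := hsol (r * L) t (by positivity) ht
  rw [hg_t, hg_rr, hg_r]
  field_simp at hsolR ⊢
  linear_combination hsolR

/-- Self-map of the equation `|x|^{-2}uₜ = Δu` between dimensions `N` and `N̄`: if the radial
profile `f(r,t)` solves `(1/r²)fₜ = f_rr + ((N-1)/r)f_r`, then
`f̄(r̄,t) = f(r̄·e^{(N̄-N)t}, t)` solves the corresponding equation in dimension `N̄`. -/
theorem stmt12 (N M : ℕ) (hN : 3 ≤ N) (hM : 3 ≤ M)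
    (f : ℝ → ℝ → ℝ) (hf : ContDiff ℝ 2 (Function.uncurry f))
    (hsol : ∀ r t : ℝ, 0 < r → 0 < t →
      (1 / r ^ 2) * deriv (fun s => f r s) t =
        deriv (fun ρ => deriv (fun σ => f σ t) ρ) r
          + (((N : ℝ) - 1) / r) * deriv (fun σ => f σ t) r)
    (g : ℝ → ℝ → ℝ)
    (hg : ∀ r t : ℝ, g r t = f (r * Real.exp (((M : ℝ) - (N : ℝ)) * t)) t) :
    ∀ r t : ℝ, 0 < r → 0 < t →
      (1 / r ^ 2) * deriv (fun s => g r s) t =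
        deriv (fun ρ => deriv (fun σ => g σ t) ρ) r
          + (((M : ℝ) - 1) / r) * deriv (fun σ => g σ t) r :=
  stmt12_general N M f hf hsol g hg
end

section
/- Let N ≥ 3. Write points of ℝ^N \ {0} in generalized spherical coordinates (r, φ₁, …, φ_{N−2}, θ) and define F_N(x,t) = θ·F(r,t), where F(r,t) = (1/√(4πt))·exp(−(log r + (N−2)t)²/(4t)). Then F_N satisfies |x|^{-2}∂_t F_N = ΔF_N on (ℝ^N \ {0}) × (0,∞) away from the coordinate singularities, and F_N is not radially symmetric. -/
/-!
With `x = log r`, the function `F` is the one-dimensional heat kernel evaluated at the moving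
point `x + (N - 2) t`. Since `r ∂ᵣ = ∂ₓ`, the radial operator `F_rr + ((N-1)/r) F_r` equals
`r⁻² (F_xx + (N - 2) F_x)`, and the drift term is exactly what the moving frame contributes to
`∂ₜ`. The factor `θ` is independent of `r` and `t` and is not constant, so `θ · F` solves the
equation but is not radial.
-/

open Real

noncomputable section

def logHeatKernel (a r t : ℝ) : ℝ :=
  1 / √(4 * π * t) * exp (-(log r + a * t) ^ 2 / (4 * t))

namespace logHeatKernel

variable (a : ℝ) {r t : ℝ}

theorem pos (ht : 0 < t) : 0 < logHeatKernel a r t := by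
  unfold logHeatKernel
  have := sqrt_pos.2 (by positivity : 0 < 4 * π * t)
  positivity

theorem eq_exp (ht : 0 < t) :
    logHeatKernel a r t = exp (-(log r + a * t) ^ 2 / (4 * t) - log (4 * π * t) / 2) := by
  have h4πt : 0 < 4 * π * t := by positivity
  have hsqrt : exp (log (4 * π * t) / 2) = √(4 * π * t) := by
    rw [← log_sqrt h4πt.le, exp_log (sqrt_pos.2 h4πt)]
  rw [logHeatKernel, exp_sub, hsqrt]
  ring

theorem hasDerivAt_space (t : ℝ) (hr : r ≠ 0) :
    HasDerivAt (fun σ => logHeatKernel a σ t)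
      (logHeatKernel a r t * (-(log r + a * t) / (2 * t * r))) r := by
  have h := ((((hasDerivAt_log hr).add_const (a * t)).fun_pow 2).fun_neg.div_const
    (4 * t)).exp.const_mul (1 / √(4 * π * t))
  refine h.congr_deriv ?_
  unfold logHeatKernel
  field_simp
  ring

theorem deriv_deriv_space (hr : r ≠ 0) (ht : t ≠ 0) :
    deriv (fun ρ => deriv (fun σ => logHeatKernel a σ t) ρ) r =
      logHeatKernel a r t * (((log r + a * t) / (2 * t * r)) ^ 2
        + (log r + a * t - 1) / (2 * t * r ^ 2)) := by
  have hderiv : (deriv fun σ => logHeatKernel a σ t) =ᶠ[nhds r]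
      fun ρ => logHeatKernel a ρ t * (-(log ρ + a * t) / (2 * t * ρ)) := by
    filter_upwards [eventually_ne_nhds hr] with ρ hρ
    exact (hasDerivAt_space a t hρ).deriv
  have hquot : HasDerivAt (fun ρ => -(log ρ + a * t) / (2 * t * ρ))
      ((-r⁻¹ * (2 * t * r) - -(log r + a * t) * (2 * t)) / (2 * t * r) ^ 2) r :=
    ((hasDerivAt_log hr).add_const (a * t)).neg.div
      (by simpa using (hasDerivAt_id r).const_mul (2 * t)) (by positivity)
  rw [hderiv.deriv_eq]
  refine ((hasDerivAt_space a t hr).mul hquot).deriv.trans ?_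
  field_simp
  ring

theorem hasDerivAt_time (r : ℝ) (ht : 0 < t) :
    HasDerivAt (fun s => logHeatKernel a r s)
      (logHeatKernel a r t * ((log r + a * t) ^ 2 / (4 * t ^ 2)
        - a * (log r + a * t) / (2 * t) - 1 / (2 * t))) t := by
  have hexp : (fun s => logHeatKernel a r s) =ᶠ[nhds t]
      fun s => exp (-(log r + a * s) ^ 2 / (4 * s) - log (4 * π * s) / 2) := by
    filter_upwards [eventually_gt_nhds ht] with s hs
    exact eq_exp a hs
  have hlin : HasDerivAt (fun s => log r + a * s) a t := by
    simpa using ((hasDerivAt_id t).const_mul a).const_add (log r)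
  have hlog : HasDerivAt (fun s => log (4 * π * s)) (4 * π / (4 * π * t)) t := by
    simpa using ((hasDerivAt_id t).const_mul (4 * π)).log (by positivity)
  have h := (((hlin.fun_pow 2).fun_neg.fun_div ((hasDerivAt_id' t).const_mul 4)
    (by positivity)).fun_sub (hlog.div_const 2)).exp
  refine (h.congr_of_eventuallyEq hexp).congr_deriv ?_
  rw [← eq_exp a ht]
  field_simp
  ring

theorem heat_equation (hr : r ≠ 0) (ht : 0 < t) :
    (1 / r ^ 2) * deriv (fun s => logHeatKernel a r s) t =
      deriv (fun ρ => deriv (fun σ => logHeatKernel a σ t) ρ) r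
        + ((a + 1) / r) * deriv (fun σ => logHeatKernel a σ t) r := by
  rw [(hasDerivAt_time a r ht).deriv, deriv_deriv_space a hr ht.ne',
    (hasDerivAt_space a t hr).deriv]
  field_simp
  ring

end logHeatKernel

end

theorem stmt13_general (N : ℕ) (F : ℝ → ℝ → ℝ)
    (hF : ∀ r t : ℝ, F r t = (1 / Real.sqrt (4 * π * t)) *
      Real.exp (-(Real.log r + ((N : ℝ) - 2) * t) ^ 2 / (4 * t)))
    (FN : ℝ → ℝ → ℝ → ℝ) (hFN : ∀ r θ t : ℝ, FN r θ t = θ * F r t) :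
    (∀ r θ t : ℝ, 0 < r → 0 < t →
      (1 / r ^ 2) * deriv (fun s => FN r θ s) t =
        θ * (deriv (fun ρ => deriv (fun σ => F σ t) ρ) r
          + (((N : ℝ) - 1) / r) * deriv (fun σ => F σ t) r)) ∧
    (∃ r θ₁ θ₂ t : ℝ, 0 < r ∧ 0 < t ∧ FN r θ₁ t ≠ FN r θ₂ t) := by
  obtain rfl : F = logHeatKernel ((N : ℝ) - 2) := funext₂ hF
  obtain rfl : FN = fun r θ t => θ * logHeatKernel ((N : ℝ) - 2) r t := funext₃ hFN
  refine ⟨fun r θ t hr ht => ?_, ⟨1, 0, 1, 1, one_pos, one_pos, ?_⟩⟩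
  · rw [deriv_const_mul θ (logHeatKernel.hasDerivAt_time _ r ht).differentiableAt,
      show (N : ℝ) - 1 = (N : ℝ) - 2 + 1 by ring, ← logHeatKernel.heat_equation _ hr.ne' ht]
    ring
  · simpa using (logHeatKernel.pos ((N : ℝ) - 2) (r := 1) one_pos).ne

/-- In generalized spherical coordinates on `ℝ^N \ {0}`, the function
`F_N(r,θ,t) = θ·F(r,t)` (no dependence on the other angles, linear in the last angular
coordinate `θ`, so its spherical Laplacian reduces to `θ·(F_rr + ((N-1)/r)F_r)`) satisfies
`|x|^{-2}∂ₜF_N = ΔF_N` away from the coordinate singularities, and `F_N` is not radially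
symmetric. -/
theorem stmt13 (N : ℕ) (hN : 3 ≤ N) (F : ℝ → ℝ → ℝ)
    (hF : ∀ r t : ℝ, F r t = (1 / Real.sqrt (4 * π * t)) *
      Real.exp (-(Real.log r + ((N : ℝ) - 2) * t) ^ 2 / (4 * t)))
    (FN : ℝ → ℝ → ℝ → ℝ) (hFN : ∀ r θ t : ℝ, FN r θ t = θ * F r t) :
    (∀ r θ t : ℝ, 0 < r → 0 < t →
      (1 / r ^ 2) * deriv (fun s => FN r θ s) t =
        θ * (deriv (fun ρ => deriv (fun σ => F σ t) ρ) r
          + (((N : ℝ) - 1) / r) * deriv (fun σ => F σ t) r)) ∧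
    (∃ r θ₁ θ₂ t : ℝ, 0 < r ∧ 0 < t ∧ FN r θ₁ t ≠ FN r θ₂ t) :=
  stmt13_general N F hF FN hFN
end

section
/- Let α ∈ (0,1) and on ℝ × (0,∞) define F₁(x,t) = α·F(x,t) for x ≤ 0 and F₁(x,t) = (1−α)·F(x,t) for x > 0, where F(x,t) = (1/√(4πt))·exp(−(log|x| − t)²/(4t)) for x ≠ 0 and F(0,t) = 0. Then F₁ is continuous on ℝ × (0,∞) and satisfies x^{-2}∂_t F₁ = ∂_xx F₁ at every (x,t) with x ≠ 0, t > 0. -/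
open Real

/-! In the variable `y = log |x|` the equation `x⁻² u_t = u_xx` becomes the heat equation with
drift `v_t = v_yy - v_y`, because `x² u_xx = v_yy - v_y`, and `F` is its fundamental solution:
the Gaussian heat kernel translated by `t`. Away from `x = 0` the weights are locally
constant; at `x = 0` continuity follows from `F(x,t) ≤ |x| / √(4πt)`, i.e. from
`(log |x| + t)² ≥ 0`. -/

open Filter Topology

noncomputable def driftHeatKernel (t y : ℝ) : ℝ :=
  1 / √(4 * π * t) * exp (-(y - t) ^ 2 / (4 * t))

section DriftHeatKernel

variable {t : ℝ}

theorem hasDerivAt_driftHeatKernel (t y : ℝ) :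
    HasDerivAt (driftHeatKernel t) (-(y - t) / (2 * t) * driftHeatKernel t y) y := by
  have hexponent : HasDerivAt (fun y => -(y - t) ^ 2 / (4 * t)) (-(y - t) / (2 * t)) y := by
    refine ((((hasDerivAt_id y).sub_const t).pow 2).neg.div_const (4 * t)).congr_deriv ?_
    rcases eq_or_ne t 0 with rfl | ht
    · simp
    · simp only [id]; field_simp; ring
  refine (hexponent.exp.const_mul (1 / √(4 * π * t))).congr_deriv ?_
  unfold driftHeatKernel; ring

theorem deriv_driftHeatKernel (t : ℝ) :
    deriv (driftHeatKernel t) = fun y => -(y - t) / (2 * t) * driftHeatKernel t y :=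
  funext fun y => (hasDerivAt_driftHeatKernel t y).deriv

theorem hasDerivAt_deriv_driftHeatKernel (t y : ℝ) :
    HasDerivAt (deriv (driftHeatKernel t))
      (((y - t) ^ 2 / (4 * t ^ 2) - 1 / (2 * t)) * driftHeatKernel t y) y := by
  rw [deriv_driftHeatKernel]
  refine ((((hasDerivAt_id y).sub_const t).neg.div_const (2 * t)).mul
    (hasDerivAt_driftHeatKernel t y)).congr_deriv ?_
  rcases eq_or_ne t 0 with rfl | ht
  · simp
  · simp only [id, Pi.neg_apply]; field_simp; ring

theorem hasDerivAt_driftHeatKernel_time (ht : 0 < t) (y : ℝ) :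
    HasDerivAt (fun s => driftHeatKernel s y)
      (((y - t) ^ 2 / (4 * t ^ 2) - 1 / (2 * t) + (y - t) / (2 * t)) * driftHeatKernel t y) t := by
  have h4πt : 0 < 4 * π * t := by positivity
  have hprefactor :
      HasDerivAt (fun s => 1 / √(4 * π * s)) (-1 / (2 * t) * (1 / √(4 * π * t))) t := by
    have h := (hasDerivAt_const t (1 : ℝ)).div
      (((hasDerivAt_id t).const_mul (4 * π)).sqrt h4πt.ne') (sqrt_pos.2 h4πt).ne'
    refine h.congr_deriv ?_
    simp only [id, mul_one, zero_mul, zero_sub, sq_sqrt h4πt.le]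
    field_simp
  have hexponent : HasDerivAt (fun s => -(y - s) ^ 2 / (4 * s))
      ((y - t) ^ 2 / (4 * t ^ 2) + (y - t) / (2 * t)) t := by
    refine ((((hasDerivAt_id t).const_sub y).pow 2).neg.div
      ((hasDerivAt_id t).const_mul 4) (by positivity)).congr_deriv ?_
    simp only [id, Pi.neg_apply, Pi.pow_apply]
    field_simp
    ring
  refine (hprefactor.mul hexponent.exp).congr_deriv ?_
  unfold driftHeatKernel; rw [← neg_sq, neg_sub]; ring

theorem continuousAt_driftHeatKernel (ht : 0 < t) (y : ℝ) :
    ContinuousAt (fun q : ℝ × ℝ => driftHeatKernel q.1 q.2) (t, y) := by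
  have h4πt : 0 < 4 * π * t := by positivity
  unfold driftHeatKernel
  fun_prop (disch := simp [(sqrt_pos.2 h4πt).ne', ht.ne'])

theorem driftHeatKernel_nonneg (t y : ℝ) : 0 ≤ driftHeatKernel t y := by
  unfold driftHeatKernel; positivity

theorem driftHeatKernel_le (ht : 0 < t) (y : ℝ) :
    driftHeatKernel t y ≤ 1 / √(4 * π * t) * exp y := by
  unfold driftHeatKernel
  gcongr
  rw [div_le_iff₀ (by positivity)]
  nlinarith [sq_nonneg (y + t)]

theorem driftHeatKernel_heat_eq (ht : 0 < t) (y : ℝ) :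
    deriv (fun s => driftHeatKernel s y) t =
      deriv (deriv (driftHeatKernel t)) y - deriv (driftHeatKernel t) y := by
  rw [(hasDerivAt_driftHeatKernel_time ht y).deriv,
    (hasDerivAt_deriv_driftHeatKernel t y).deriv, deriv_driftHeatKernel]
  ring

end DriftHeatKernel

theorem deriv_deriv_comp_log {g : ℝ → ℝ} (hg : Differentiable ℝ g) {x : ℝ} (hx : x ≠ 0)
    (hg' : DifferentiableAt ℝ (deriv g) (log x)) :
    deriv (deriv fun r => g (log r)) x = (deriv (deriv g) (log x) - deriv g (log x)) / x ^ 2 := by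
  have hfirst : deriv (fun r => g (log r)) =ᶠ[𝓝 x] fun r => deriv g (log r) / r := by
    filter_upwards [eventually_ne_nhds hx] with r hr
    exact ((hg _).hasDerivAt.comp r (hasDerivAt_log hr)).deriv
  have hsecond : HasDerivAt (fun r => deriv g (log r) / r)
      ((deriv (deriv g) (log x) - deriv g (log x)) / x ^ 2) x := by
    refine ((hg'.hasDerivAt.comp x (hasDerivAt_log hx)).div (hasDerivAt_id x) hx).congr_deriv ?_
    simp only [id, Function.comp_apply]
    field_simp
  rw [hfirst.deriv_eq, hsecond.deriv]

/-- Since `Real.log x = log |x|`, this is `F` weighted by `a` on `x ≤ 0` and by `b` on `x > 0`. -/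
noncomputable def twoSidedKernel (a b x t : ℝ) : ℝ :=
  (if x ≤ 0 then a else b) * if x = 0 then 0 else driftHeatKernel t (log x)

section TwoSidedKernel

variable {a b x t : ℝ}

theorem twoSidedKernel_eventually_eq (hx : x ≠ 0) :
    ∀ᶠ σ in 𝓝 x, ∀ s,
      twoSidedKernel a b σ s = (if x ≤ 0 then a else b) * driftHeatKernel s (log σ) := by
  rcases hx.lt_or_gt with hneg | hpos
  · filter_upwards [eventually_lt_nhds hneg] with σ hσ s
    simp [twoSidedKernel, hσ.le, hσ.ne, hneg.le]
  · filter_upwards [eventually_gt_nhds hpos] with σ hσ s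
    simp [twoSidedKernel, hσ.not_ge, hσ.ne', hpos.not_ge]

theorem abs_twoSidedKernel_le (ht : 0 < t) :
    |twoSidedKernel a b x t| ≤ max |a| |b| * (1 / √(4 * π * t) * |x|) := by
  unfold twoSidedKernel
  rw [abs_mul]
  gcongr
  · split_ifs <;> simp
  · split_ifs with hx
    · rw [abs_zero]; positivity
    · rw [abs_of_nonneg (driftHeatKernel_nonneg _ _), ← exp_log_eq_abs hx]
      exact driftHeatKernel_le ht _

theorem continuousWithinAt_twoSidedKernel_zero (ht : 0 < t) :
    ContinuousWithinAt (fun p : ℝ × ℝ => twoSidedKernel a b p.1 p.2)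
      (Set.univ ×ˢ Set.Ioi 0) (0, t) := by
  have hbound : Tendsto (fun p : ℝ × ℝ => max |a| |b| * (1 / √(4 * π * p.2) * |p.1|))
      (𝓝 (0, t)) (𝓝 0) := by
    have : √(4 * π * t) ≠ 0 := by positivity
    convert (show ContinuousAt (fun p : ℝ × ℝ => max |a| |b| * (1 / √(4 * π * p.2) * |p.1|))
      (0, t) by fun_prop (disch := exact this)).tendsto using 2
    simp
  have hzero : twoSidedKernel a b 0 t = 0 := by simp [twoSidedKernel]
  show Tendsto _ _ (𝓝 (twoSidedKernel a b 0 t))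
  rw [hzero]
  refine squeeze_zero_norm' ?_ (hbound.mono_left nhdsWithin_le_nhds)
  filter_upwards [self_mem_nhdsWithin] with p hp
  exact abs_twoSidedKernel_le hp.2

theorem continuousAt_twoSidedKernel (hx : x ≠ 0) (ht : 0 < t) :
    ContinuousAt (fun p : ℝ × ℝ => twoSidedKernel a b p.1 p.2) (x, t) := by
  have hlocal := (continuous_fst.tendsto (x, t)).eventually
    (twoSidedKernel_eventually_eq (a := a) (b := b) hx)
  have hkernel : ContinuousAt (fun p : ℝ × ℝ => driftHeatKernel p.2 (log p.1)) (x, t) :=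
    (continuousAt_driftHeatKernel ht (log x)).comp_of_eq
      (f := fun p : ℝ × ℝ => (p.2, log p.1)) (by fun_prop (disch := exact hx)) rfl
  exact (continuousAt_const.mul hkernel).congr (hlocal.mono fun p hp => (hp p.2).symm)

theorem continuousOn_twoSidedKernel :
    ContinuousOn (fun p : ℝ × ℝ => twoSidedKernel a b p.1 p.2) (Set.univ ×ˢ Set.Ioi 0) := by
  rintro ⟨x, t⟩ ⟨-, ht : 0 < t⟩
  rcases eq_or_ne x 0 with rfl | hx
  · exact continuousWithinAt_twoSidedKernel_zero ht
  · exact (continuousAt_twoSidedKernel hx ht).continuousWithinAt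

theorem twoSidedKernel_heat_eq (hx : x ≠ 0) (ht : 0 < t) :
    1 / x ^ 2 * deriv (fun s => twoSidedKernel a b x s) t =
      deriv (fun ρ => deriv (fun σ => twoSidedKernel a b σ t) ρ) x := by
  have hlocal := twoSidedKernel_eventually_eq (a := a) (b := b) hx
  have htime : (fun s => twoSidedKernel a b x s) = fun s => _ * driftHeatKernel s (log x) :=
    funext hlocal.self_of_nhds
  have hspace :
      (fun σ => twoSidedKernel a b σ t) =ᶠ[𝓝 x] fun σ => _ * driftHeatKernel t (log σ) :=
    hlocal.mono fun σ hσ => hσ t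
  rw [htime, hspace.deriv.deriv_eq, deriv_const_mul_field', deriv_const_mul_field',
    deriv_const_mul_field']
  beta_reduce
  rw [driftHeatKernel_heat_eq ht,
    deriv_deriv_comp_log (fun y => (hasDerivAt_driftHeatKernel t y).differentiableAt) hx
      (hasDerivAt_deriv_driftHeatKernel t _).differentiableAt]
  ring

end TwoSidedKernel

theorem stmt16_general (α : ℝ)
    (F : ℝ → ℝ → ℝ)
    (hF : ∀ r t : ℝ, F r t = if r = 0 then 0 else (1 / Real.sqrt (4 * π * t)) *
      Real.exp (-(Real.log |r| - t) ^ 2 / (4 * t)))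
    (F₁ : ℝ → ℝ → ℝ)
    (hF₁ : ∀ x t : ℝ, F₁ x t = if x ≤ 0 then α * F x t else (1 - α) * F x t) :
    ContinuousOn (fun p : ℝ × ℝ => F₁ p.1 p.2) (Set.univ ×ˢ Set.Ioi 0) ∧
    ∀ x t : ℝ, x ≠ 0 → 0 < t →
      (1 / x ^ 2) * deriv (fun s => F₁ x s) t =
        deriv (fun ρ => deriv (fun σ => F₁ σ t) ρ) x := by
  have hF₁_eq : F₁ = twoSidedKernel α (1 - α) := by
    funext x t
    rw [hF₁, hF, twoSidedKernel, log_abs]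
    split_ifs <;> rfl
  subst hF₁_eq
  exact ⟨continuousOn_twoSidedKernel, fun x t hx ht => twoSidedKernel_heat_eq hx ht⟩

/-- In dimension `N = 1`, with `F(x,t) = (4πt)^{-1/2} exp(-(log|x| - t)²/(4t))` for `x ≠ 0`
and `F(0,t) = 0`, the two-branch function `F₁ = α·F` on `x ≤ 0` and `(1-α)·F` on `x > 0`
(`α ∈ (0,1)`) is continuous on `ℝ × (0,∞)` and solves the one-dimensional singular-density
heat equation `x^{-2}∂ₜF₁ = ∂ₓₓF₁` at every `x ≠ 0`, `t > 0`. -/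
theorem stmt16 (α : ℝ) (hα : α ∈ Set.Ioo (0 : ℝ) 1)
    (F : ℝ → ℝ → ℝ)
    (hF : ∀ r t : ℝ, F r t = if r = 0 then 0 else (1 / Real.sqrt (4 * π * t)) *
      Real.exp (-(Real.log |r| - t) ^ 2 / (4 * t)))
    (F₁ : ℝ → ℝ → ℝ)
    (hF₁ : ∀ x t : ℝ, F₁ x t = if x ≤ 0 then α * F x t else (1 - α) * F x t) :
    ContinuousOn (fun p : ℝ × ℝ => F₁ p.1 p.2) (Set.univ ×ˢ Set.Ioi 0) ∧
    ∀ x t : ℝ, x ≠ 0 → 0 < t →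
      (1 / x ^ 2) * deriv (fun s => F₁ x s) t =
        deriv (fun ρ => deriv (fun σ => F₁ σ t) ρ) x :=
  stmt16_general α F hF F₁ hF₁
end
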